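/- Let L be an orthomodular ortholattice and define the Sasaki projection φ_a(b) := a ⊓ (aᶜ ⊔ b). Then L satisfies, for all a, b, c ∈ L, the Godowski–Greechie equation φ_{bᶜ}(a) ⊔ α(a,b,c) = φ_{cᶜ}(a) ⊔ α(a,b,c), where α(a,b,c) := (b ⊔ c) ⊓ (φ_{bᶜ}(a) ⊔ φ_{cᶜ}(a)), if and only if L satisfies the 3OA law: for all a, b, c ∈ L, (a →₁ c) ⊓ (a ≡c b) ≤ b →₁ c. -/

import Mathlib

/-- An ortholattice: a bounded lattice with an orthocomplementation. -/
class Ortholattice (α : Type*) extends Lattice α, BoundedOrder α, Compl α where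
  compl_compl : ∀ x : α, xᶜᶜ = x
  compl_antitone : ∀ x y : α, x ≤ y → yᶜ ≤ xᶜ
  inf_compl : ∀ x : α, x ⊓ xᶜ = ⊥
  sup_compl : ∀ x : α, x ⊔ xᶜ = ⊤

/-- The Sasaki implication `a →₁ b = aᶜ ⊔ (a ⊓ b)`. -/
def olImp1 {α : Type*} [Ortholattice α] (a b : α) : α := aᶜ ⊔ (a ⊓ b)

/-- The 3-variable orthoarguesian identity
`a ≡c b = ((a →₁ c) ⊓ (b →₁ c)) ⊔ ((aᶜ →₁ c) ⊓ (bᶜ →₁ c))`. -/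
def oa3 {α : Type*} [Ortholattice α] (c a b : α) : α :=
  (olImp1 a c ⊓ olImp1 b c) ⊔ (olImp1 aᶜ c ⊓ olImp1 bᶜ c)

/-- The 4-variable orthoarguesian identity
`a ≡(c,d) b = (a ≡d b) ⊔ ((a ≡d c) ⊓ (b ≡d c))`. -/
def oa4 {α : Type*} [Ortholattice α] (c d a b : α) : α :=
  oa3 d a b ⊔ (oa3 d a c ⊓ oa3 d b c)

/-- The Sasaki projection `φ_a(b) = a ⊓ (aᶜ ⊔ b)`. -/
def sasaki {α : Type*} [Ortholattice α] (a b : α) : α := a ⊓ (aᶜ ⊔ b)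

/-! In an orthomodular lattice the Sasaki projections satisfy `φ_{(φ_{aᶜ}(d))ᶜ}(d) = φ_a(d)`.
Complementing the 3OA law at `(a, b, c)` turns it into
`φ_b(d) ≤ φ_a(d) ⊔ ((φ_a(d) ⊔ φ_b(d)) ⊓ (φ_{aᶜ}(d) ⊔ φ_{bᶜ}(d)))` with `d = cᶜ`, and by that
identity this follows from the Godowski–Greechie equation at `(d, φ_{aᶜ}(d), φ_{bᶜ}(d))`.
Conversely, the complemented 3OA law at `(cᶜ, bᶜ, aᶜ)` gives one half of the Godowski–Greechie
equation at `(a, b, c)` because `φ_c(a) ⊔ φ_b(a) ≤ b ⊔ c`; this direction holds in every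
ortholattice. -/

namespace Ortholattice

variable {α : Type*} [Ortholattice α]

attribute [simp] Ortholattice.compl_compl

theorem compl_le_compl_iff {x y : α} : xᶜ ≤ yᶜ ↔ y ≤ x :=
  ⟨fun h => by simpa using compl_antitone _ _ h, compl_antitone y x⟩

theorem le_compl_iff_le_compl {x y : α} : x ≤ yᶜ ↔ y ≤ xᶜ := by
  rw [← compl_le_compl_iff, compl_compl]

protected theorem compl_sup (x y : α) : (x ⊔ y)ᶜ = xᶜ ⊓ yᶜ :=
  le_antisymm (le_inf (compl_antitone _ _ le_sup_left) (compl_antitone _ _ le_sup_right))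
    (le_compl_iff_le_compl.mp (sup_le (le_compl_iff_le_compl.mp inf_le_left)
      (le_compl_iff_le_compl.mp inf_le_right)))

protected theorem compl_inf (x y : α) : (x ⊓ y)ᶜ = xᶜ ⊔ yᶜ := by
  rw [← compl_compl (xᶜ ⊔ yᶜ), Ortholattice.compl_sup, compl_compl, compl_compl]

theorem inf_le_iff_compl_le_sup {u v w : α} : u ⊓ v ≤ w ↔ wᶜ ≤ uᶜ ⊔ vᶜ := by
  rw [← compl_le_compl_iff, Ortholattice.compl_inf]

theorem compl_olImp1 (x y : α) : (olImp1 x y)ᶜ = sasaki x yᶜ := by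
  rw [olImp1, sasaki, Ortholattice.compl_sup, Ortholattice.compl_inf, compl_compl]

theorem compl_oa3 (c a b : α) :
    (oa3 c a b)ᶜ = (sasaki a cᶜ ⊔ sasaki b cᶜ) ⊓ (sasaki aᶜ cᶜ ⊔ sasaki bᶜ cᶜ) := by
  simp only [oa3, Ortholattice.compl_sup, Ortholattice.compl_inf, compl_olImp1]

theorem olImp1_inf_oa3_le_iff (a b c : α) :
    olImp1 a c ⊓ oa3 c a b ≤ olImp1 b c ↔
      sasaki b cᶜ ≤ sasaki a cᶜ ⊔
        ((sasaki a cᶜ ⊔ sasaki b cᶜ) ⊓ (sasaki aᶜ cᶜ ⊔ sasaki bᶜ cᶜ)) := by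
  rw [inf_le_iff_compl_le_sup, compl_olImp1, compl_olImp1, compl_oa3]

variable (α) in
def IsOrthomodular : Prop := ∀ a b : α, a ≤ b → a ⊔ (aᶜ ⊓ b) = b

variable (α) in
def GodowskiGreechieLaw : Prop :=
  ∀ a b c : α, sasaki bᶜ a ⊔ ((b ⊔ c) ⊓ (sasaki bᶜ a ⊔ sasaki cᶜ a)) =
    sasaki cᶜ a ⊔ ((b ⊔ c) ⊓ (sasaki bᶜ a ⊔ sasaki cᶜ a))

variable (α) in
def OA3Law : Prop := ∀ a b c : α, olImp1 a c ⊓ oa3 c a b ≤ olImp1 b c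

namespace IsOrthomodular

theorem eq_of_le_of_compl_inf_eq_bot (hOM : IsOrthomodular α) {a b : α} (hab : a ≤ b)
    (h : aᶜ ⊓ b = ⊥) : a = b := by
  rw [← hOM a b hab, h, sup_bot_eq]

theorem sasaki_eq_of_le (hOM : IsOrthomodular α) {a b : α} (hab : a ≤ b) : sasaki b a = a := by
  have := congrArg (·ᶜ) (hOM bᶜ aᶜ (compl_le_compl_iff.mpr hab))
  simpa [sasaki, Ortholattice.compl_sup, Ortholattice.compl_inf] using this

theorem sasaki_compl_sasaki (hOM : IsOrthomodular α) (p x : α) :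
    sasaki (sasaki p x)ᶜ x = sasaki pᶜ x := by
  set y := pᶜ ⊔ x
  set e := sasaki p x
  have he : e = p ⊓ y := rfl
  have hey : eᶜ ⊓ y = pᶜ := by
    rw [he, Ortholattice.compl_inf, inf_comm, sup_comm]
    exact hOM.sasaki_eq_of_le le_sup_left
  have hex : e ⊔ x = (p ⊔ x) ⊓ y := by
    refine hOM.eq_of_le_of_compl_inf_eq_bot
      (sup_le (le_inf (inf_le_left.trans le_sup_left) inf_le_right)
        (le_inf le_sup_right le_sup_right)) (le_bot_iff.mp ?_)
    calc (e ⊔ x)ᶜ ⊓ ((p ⊔ x) ⊓ y) ≤ (pᶜ ⊓ xᶜ) ⊓ (p ⊔ x) := by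
          rw [Ortholattice.compl_sup, ← hey]
          exact le_inf (le_inf (le_inf (inf_le_left.trans inf_le_left)
            (inf_le_right.trans inf_le_right)) (inf_le_left.trans inf_le_right))
            (inf_le_right.trans inf_le_left)
      _ = ⊥ := by rw [← Ortholattice.compl_sup, inf_comm, Ortholattice.inf_compl]
  rw [sasaki, compl_compl, hex, inf_comm (p ⊔ x), ← inf_assoc, hey, sasaki, compl_compl]

theorem oa3Law_of_godowskiGreechieLaw (hOM : IsOrthomodular α)
    (hGG : GodowskiGreechieLaw α) : OA3Law α := by
  intro a b c
  rw [olImp1_inf_oa3_le_iff]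
  have h := hGG cᶜ (sasaki aᶜ cᶜ) (sasaki bᶜ cᶜ)
  rw [hOM.sasaki_compl_sasaki, hOM.sasaki_compl_sasaki, compl_compl, compl_compl,
    inf_comm (sasaki aᶜ cᶜ ⊔ sasaki bᶜ cᶜ)] at h
  exact h ▸ le_sup_left

end IsOrthomodular

theorem sasaki_compl_le_of_oa3Law (hOA : OA3Law α) (a b c : α) :
    sasaki bᶜ a ≤ sasaki cᶜ a ⊔ ((b ⊔ c) ⊓ (sasaki bᶜ a ⊔ sasaki cᶜ a)) := by
  have h := (olImp1_inf_oa3_le_iff cᶜ bᶜ aᶜ).mp (hOA cᶜ bᶜ aᶜ)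
  simp only [compl_compl] at h
  refine h.trans (sup_le_sup_left (le_inf ?_ (inf_le_left.trans (sup_comm _ _).le)) _)
  exact inf_le_right.trans ((sup_le_sup inf_le_left inf_le_left).trans (sup_comm c b).le)

theorem godowskiGreechieLaw_of_oa3Law (hOA : OA3Law α) : GodowskiGreechieLaw α := by
  intro a b c
  have hbc := sasaki_compl_le_of_oa3Law hOA a b c
  have hcb := sasaki_compl_le_of_oa3Law hOA a c b
  rw [sup_comm c, sup_comm (sasaki cᶜ a)] at hcb
  exact le_antisymm (sup_le hbc le_sup_right) (sup_le hcb le_sup_right)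

end Ortholattice

/-- An orthomodular ortholattice satisfies the Godowski–Greechie equation
`φ_{bᶜ}(a) ⊔ α(a,b,c) = φ_{cᶜ}(a) ⊔ α(a,b,c)` iff it satisfies the 3OA law. -/
theorem stmt_16 (α : Type*) [Ortholattice α]
    (hOM : ∀ a b : α, a ≤ b → a ⊔ (aᶜ ⊓ b) = b) :
    (∀ a b c : α,
        sasaki bᶜ a ⊔ ((b ⊔ c) ⊓ (sasaki bᶜ a ⊔ sasaki cᶜ a)) =
          sasaki cᶜ a ⊔ ((b ⊔ c) ⊓ (sasaki bᶜ a ⊔ sasaki cᶜ a))) ↔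
      (∀ a b c : α, olImp1 a c ⊓ oa3 c a b ≤ olImp1 b c) :=
  ⟨Ortholattice.IsOrthomodular.oa3Law_of_godowskiGreechieLaw hOM,
    Ortholattice.godowskiGreechieLaw_of_oa3Law⟩
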